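/- Let m ≥ 1 be an integer and let α < −m be a real number that is not an integer. Set N = ⌊−α⌋ − m. Let ε₀ > 0 and let φ : ℝ → ℝ be of class C^{N+1} on [0, ε₀], with T(t) = Σ_{j=0}^{N} φ^{(j)}(0) t^j / j! its degree-N Taylor polynomial at 0. Suppose there are constants σ ≥ 0 and b̄ ≥ 0 such that |φ(0)| ≤ σ and |φ^{(j)}(t)| ≤ b̄ for all 1 ≤ j ≤ N+1 and all t ∈ [0, ε₀]. Then the Hadamard finite part L = Σ_{j=0}^{N} (φ^{(j)}(0)/((α+m+j) j!)) ε₀^{α+m+j} + ∫_0^{ε₀} t^{α+m−1}(φ(t) − T(t)) dt satisfies |L| ≤ (σ/|α+m|) · ε₀^{α+m} + Σ_{j=1}^{N+1} (b̄/(|α+m+j| · j!)) · ε₀^{α+m+j}. -/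

import Mathlib

/-!
Split the finite part into the Taylor coefficient terms and the integral of the Taylor remainder.
Each coefficient term is bounded through `|φ^{(j)}(0)| ≤ b̄` (or `σ` for `j = 0`). By Lagrange's
form of the remainder, `|φ t - T t| ≤ b̄ t^{N+1} / (N+1)!`, so the integrand is dominated by a
multiple of `t^{α+m+N}`; as `α` is not an integer, `N = ⌊-α⌋ - m` gives `α + m + N + 1 > 0`, so
this is integrable at `0` and integrates to the `j = N + 1` term of the bound.
-/
open MeasureTheory Set

lemma Icc_eventuallyEq_Icc_of_lt {a x b y : ℝ} (hyx : y < x) (hxb : x ≤ b) :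
    Icc a x =ᶠ[nhds y] Icc a b := by
  filter_upwards [Iio_mem_nhds hyx] with z hz
  simp only [eq_iff_iff]
  exact ⟨fun h => ⟨h.1, h.2.trans hxb⟩, fun h => ⟨h.1, (mem_Iio.1 hz).le⟩⟩

lemma iteratedDerivWithin_Icc_of_lt {f : ℝ → ℝ} {a x b y : ℝ} (hyx : y < x) (hxb : x ≤ b)
    (k : ℕ) : iteratedDerivWithin k f (Icc a x) y = iteratedDerivWithin k f (Icc a b) y := by
  simp only [iteratedDerivWithin,
    iteratedFDerivWithin_congr_set (Icc_eventuallyEq_Icc_of_lt hyx hxb)]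

lemma taylorWithinEval_eq_sum (f : ℝ → ℝ) (n : ℕ) (s : Set ℝ) (x₀ x : ℝ) :
    taylorWithinEval f n s x₀ x =
      ∑ k ∈ Finset.range (n + 1), iteratedDerivWithin k f s x₀ * (x - x₀) ^ k / k.factorial := by
  rw [taylor_within_apply]
  refine Finset.sum_congr rfl fun k _ => ?_
  rw [smul_eq_mul]
  ring

lemma abs_sub_taylorWithinEval_le {f : ℝ → ℝ} {a b C x : ℝ} {n : ℕ}
    (hf : ContDiffOn ℝ (n + 1) f (Icc a b)) (hx : x ∈ Icc a b)
    (hC : ∀ y ∈ Icc a b, |iteratedDerivWithin (n + 1) f (Icc a b) y| ≤ C) :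
    |f x - taylorWithinEval f n (Icc a b) a x| ≤ C * (x - a) ^ (n + 1) / (n + 1).factorial := by
  rcases hx.1.eq_or_lt with rfl | hax
  · simp [taylorWithinEval_self]
  have hsub : Icc a x ⊆ Icc a b := Icc_subset_Icc_right hx.2
  have hfx : ContDiffOn ℝ (n + 1) f (Icc a x) := hf.mono hsub
  have hdiff : DifferentiableOn ℝ (iteratedDerivWithin n f (Icc a x)) (Ioo a x) :=
    (hfx.differentiableOn_iteratedDerivWithin (mod_cast n.lt_succ_self)
      (uniqueDiffOn_Icc hax)).mono Ioo_subset_Icc_self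
  obtain ⟨y, hy, hlag⟩ := taylor_mean_remainder_lagrange hax.ne
    (by rw [uIcc_of_le hax.le]; exact hfx.of_succ) (by rwa [uIcc_of_le hax.le, uIoo_of_le hax.le])
  rw [uIcc_of_le hax.le] at hlag
  rw [uIoo_of_le hax.le] at hy
  have htaylor : taylorWithinEval f n (Icc a x) a x = taylorWithinEval f n (Icc a b) a x := by
    simp only [taylorWithinEval_eq_sum, iteratedDerivWithin_Icc_of_lt hax hx.2]
  rw [← htaylor, hlag, iteratedDerivWithin_Icc_of_lt hy.2 hx.2, abs_div, abs_mul, abs_pow,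
    abs_of_nonneg (sub_nonneg.2 hx.1), Nat.abs_cast]
  gcongr
  exact hC y (hsub (Ioo_subset_Icc_self hy))

lemma abs_setIntegral_rpow_mul_le {β ε C : ℝ} {n : ℕ} {g : ℝ → ℝ} (hε : 0 < ε)
    (hβ : 0 < β + n) (hg : ∀ t ∈ Ioo 0 ε, |g t| ≤ C * t ^ n) :
    |∫ t in Ioo 0 ε, t ^ (β - 1) * g t| ≤ C / (β + n) * ε ^ (β + n) := by
  have hbound : ∀ᵐ t ∂volume.restrict (Ioo 0 ε), ‖t ^ (β - 1) * g t‖ ≤ C * t ^ (β + n - 1) := by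
    rw [ae_restrict_iff' measurableSet_Ioo]
    filter_upwards with t ht
    have hpos : 0 < t ^ (β - 1) := Real.rpow_pos_of_pos ht.1 _
    calc ‖t ^ (β - 1) * g t‖ = t ^ (β - 1) * |g t| := by
          rw [Real.norm_eq_abs, abs_mul, abs_of_pos hpos]
      _ ≤ t ^ (β - 1) * (C * t ^ n) := mul_le_mul_of_nonneg_left (hg t ht) hpos.le
      _ = C * t ^ (β + n - 1) := by
          rw [← Real.rpow_natCast, mul_left_comm, ← Real.rpow_add ht.1]
          ring_nf
  have hint : IntegrableOn (fun t => C * t ^ (β + n - 1)) (Ioo 0 ε) :=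
    ((intervalIntegral.integrableOn_Ioo_rpow_iff hε).2 (by linarith)).const_mul C
  calc |∫ t in Ioo 0 ε, t ^ (β - 1) * g t| ≤ ∫ t in Ioo 0 ε, C * t ^ (β + n - 1) :=
        norm_integral_le_of_norm_le hint hbound
    _ = C / (β + n) * ε ^ (β + n) := by
        rw [integral_const_mul, ← integral_Ioc_eq_integral_Ioo,
          ← intervalIntegral.integral_of_le hε.le, integral_rpow (Or.inl (by linarith)),
          sub_add_cancel, Real.zero_rpow hβ.ne']
        ring

lemma abs_div_mul_le {c B d k e : ℝ} (hc : |c| ≤ B) (hk : 0 ≤ k) (he : 0 ≤ e) :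
    |c / (d * k) * e| ≤ B / (|d| * k) * e := by
  rw [abs_mul, abs_div, abs_mul, abs_of_nonneg hk, abs_of_nonneg he]
  gcongr

lemma abs_sum_div_mul_rpow_le {β ε σ b : ℝ} {N : ℕ} (c : ℕ → ℝ) (hε : 0 ≤ ε)
    (hc₀ : |c 0| ≤ σ) (hc : ∀ j ∈ Finset.Icc 1 N, |c j| ≤ b) :
    |∑ j ∈ Finset.range (N + 1), c j / ((β + j) * j.factorial) * ε ^ (β + j)| ≤
      σ / |β| * ε ^ β + ∑ j ∈ Finset.Icc 1 N, b / (|β + j| * j.factorial) * ε ^ (β + j) := by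
  rw [Finset.range_eq_Ico, Finset.sum_eq_sum_Ico_succ_bot N.add_one_pos, zero_add,
    Finset.Ico_add_one_right_eq_Icc]
  refine (abs_add_le _ _).trans (add_le_add ?_ ((Finset.abs_sum_le_sum_abs _ _).trans ?_))
  · simpa using abs_div_mul_le (d := β) hc₀ zero_le_one (Real.rpow_nonneg hε β)
  · exact Finset.sum_le_sum fun j hj =>
      abs_div_mul_le (hc j hj) (Nat.cast_nonneg _) (Real.rpow_nonneg hε _)

theorem stmt_5_general (m : ℕ) (α : ℝ)
    (hαint : ∀ n : ℤ, α ≠ (n : ℝ))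
    (N : ℕ) (hN : (N : ℤ) = ⌊-α⌋ - m)
    (ε₀ : ℝ) (hε₀ : 0 < ε₀) (φ : ℝ → ℝ)
    (hφ : ContDiffOn ℝ (N + 1) φ (Set.Icc 0 ε₀))
    (σ b : ℝ)
    (hσ : |φ 0| ≤ σ)
    (hb : ∀ j : ℕ, 1 ≤ j → j ≤ N + 1 → ∀ t ∈ Set.Icc (0 : ℝ) ε₀,
      |iteratedDerivWithin j φ (Set.Icc 0 ε₀) t| ≤ b) :
    |(∑ j ∈ Finset.range (N + 1),
        iteratedDerivWithin j φ (Set.Icc 0 ε₀) 0 / ((α + m + j) * (j.factorial : ℝ))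
          * ε₀ ^ (α + m + j)) +
      ∫ t in Set.Ioo (0 : ℝ) ε₀, t ^ (α + m - 1) *
        (φ t - ∑ j ∈ Finset.range (N + 1),
          iteratedDerivWithin j φ (Set.Icc 0 ε₀) 0 * t ^ j / (j.factorial : ℝ))| ≤
    σ / |α + m| * ε₀ ^ (α + m) +
      ∑ j ∈ Finset.Icc 1 (N + 1), b / (|α + m + j| * (j.factorial : ℝ)) * ε₀ ^ (α + m + j) := by
  have hfloor : (⌊-α⌋ : ℝ) < -α := (Int.floor_le _).lt_of_ne fun h =>
    hαint (-⌊-α⌋) (by push_cast; linarith)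
  have hNα : (N : ℝ) = ⌊-α⌋ - m := by exact_mod_cast hN
  have hexp : 0 < α + m + ((N + 1 : ℕ) : ℝ) := by
    push_cast; linarith [Int.lt_floor_add_one (-α)]
  have hsum := abs_sum_div_mul_rpow_le (β := α + m) (N := N)
    (fun j => iteratedDerivWithin j φ (Set.Icc 0 ε₀) 0) hε₀.le (by simpa using hσ)
    fun j hj => hb j (Finset.mem_Icc.1 hj).1 (by linarith [(Finset.mem_Icc.1 hj).2]) 0
      ⟨le_rfl, hε₀.le⟩
  have hremainder : ∀ t ∈ Set.Ioo 0 ε₀, |φ t - ∑ j ∈ Finset.range (N + 1),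
      iteratedDerivWithin j φ (Set.Icc 0 ε₀) 0 * t ^ j / (j.factorial : ℝ)| ≤
        b / ((N + 1).factorial : ℝ) * t ^ (N + 1) := fun t ht => by
    simpa [taylorWithinEval_eq_sum, mul_div_right_comm] using
      abs_sub_taylorWithinEval_le hφ (Set.Ioo_subset_Icc_self ht)
        fun y hy => hb (N + 1) N.add_one_pos le_rfl y hy
  have hintegral := abs_setIntegral_rpow_mul_le hε₀ hexp hremainder
  refine (abs_add_le _ _).trans ((add_le_add hsum hintegral).trans_eq ?_)
  rw [Finset.sum_Icc_succ_top (by omega), abs_of_pos hexp, div_div,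
    mul_comm (((N + 1).factorial : ℕ) : ℝ)]
  ring

/-- Bound on Hadamard's finite part: for `α < -m` not an integer,
`N = ⌊-α⌋ - m`, `φ` of class `C^{N+1}` on `[0, ε₀]` with `|φ 0| ≤ σ` and
`|φ^{(j)}| ≤ b̄` on `[0, ε₀]` for `1 ≤ j ≤ N+1`, the finite part
`L = Σ_j φ^{(j)}(0)/((α+m+j) j!) ε₀^{α+m+j} + ∫_0^{ε₀} t^{α+m-1}(φ t - T t) dt`
satisfies `|L| ≤ (σ/|α+m|) ε₀^{α+m} + Σ_{j=1}^{N+1} (b̄/(|α+m+j| j!)) ε₀^{α+m+j}`. -/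
theorem stmt_5 (m : ℕ) (hm : 1 ≤ m) (α : ℝ) (hα : α < -(m : ℝ))
    (hαint : ∀ n : ℤ, α ≠ (n : ℝ))
    (N : ℕ) (hN : (N : ℤ) = ⌊-α⌋ - m)
    (ε₀ : ℝ) (hε₀ : 0 < ε₀) (φ : ℝ → ℝ)
    (hφ : ContDiffOn ℝ (N + 1) φ (Set.Icc 0 ε₀))
    (σ b : ℝ) (hσ0 : 0 ≤ σ) (hb0 : 0 ≤ b)
    (hσ : |φ 0| ≤ σ)
    (hb : ∀ j : ℕ, 1 ≤ j → j ≤ N + 1 → ∀ t ∈ Set.Icc (0 : ℝ) ε₀,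
      |iteratedDerivWithin j φ (Set.Icc 0 ε₀) t| ≤ b) :
    |(∑ j ∈ Finset.range (N + 1),
        iteratedDerivWithin j φ (Set.Icc 0 ε₀) 0 / ((α + m + j) * (j.factorial : ℝ))
          * ε₀ ^ (α + m + j)) +
      ∫ t in Set.Ioo (0 : ℝ) ε₀, t ^ (α + m - 1) *
        (φ t - ∑ j ∈ Finset.range (N + 1),
          iteratedDerivWithin j φ (Set.Icc 0 ε₀) 0 * t ^ j / (j.factorial : ℝ))| ≤
    σ / |α + m| * ε₀ ^ (α + m) +
      ∑ j ∈ Finset.Icc 1 (N + 1), b / (|α + m + j| * (j.factorial : ℝ)) * ε₀ ^ (α + m + j) :=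
  stmt_5_general m α hαint N hN ε₀ hε₀ φ hφ σ b hσ hb
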